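/- There do not exist real numbers b_0, b_1, ..., b_11 such that: (a) b_i - 1/2 is an integer for each i in {0,1,2,3,7,8}; (b) b_j is an integer for each j in {4,5,6,9,10,11}; (c) the sum of all twelve b_i equals 0; (d) no b_i is a positive integer; and (e) none of the six sums s_1 = b_1+b_2+b_4, s_2 = b_2+b_3+b_5, s_3 = b_1+b_3+b_6, s_4 = b_7+b_8+b_9, s_5 = b_0+b_7+b_10, s_6 = b_0+b_8+b_11 is a positive integer. -/
import Mathlib

private lemma nonpos_of_int (x : ℝ) (N : ℤ) (hx : x = N)
    (h : ¬ ∃ n : ℤ, 0 < n ∧ x = n) : x ≤ 0 := by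
  by_contra h'
  push_neg at h'
  exact h ⟨N, by exact_mod_cast hx ▸ h', hx⟩

/-- Arithmetic core of Example 4.2: no choice of residues `b_i` with the prescribed
half-integrality/integrality, total sum zero, avoiding positive integers at each line
and at each of the six triple points. -/
theorem stmt_0 : ¬ ∃ b : Fin 12 → ℝ,
    (∀ i ∈ ({0, 1, 2, 3, 7, 8} : Finset (Fin 12)), ∃ n : ℤ, b i - 1/2 = n) ∧
    (∀ j ∈ ({4, 5, 6, 9, 10, 11} : Finset (Fin 12)), ∃ n : ℤ, b j = n) ∧
    (∑ i, b i) = 0 ∧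
    (∀ i, ¬ ∃ n : ℤ, 0 < n ∧ b i = n) ∧
    (¬ ∃ n : ℤ, 0 < n ∧ b 1 + b 2 + b 4 = n) ∧
    (¬ ∃ n : ℤ, 0 < n ∧ b 2 + b 3 + b 5 = n) ∧
    (¬ ∃ n : ℤ, 0 < n ∧ b 1 + b 3 + b 6 = n) ∧
    (¬ ∃ n : ℤ, 0 < n ∧ b 7 + b 8 + b 9 = n) ∧
    (¬ ∃ n : ℤ, 0 < n ∧ b 0 + b 7 + b 10 = n) ∧
    (¬ ∃ n : ℤ, 0 < n ∧ b 0 + b 8 + b 11 = n) := by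
  rintro ⟨b, h1, h2, hsum, hpos, hs1, hs2, hs3, hs4, hs5, hs6⟩
  obtain ⟨m0, hm0⟩ := h1 0 (by decide)
  obtain ⟨m1, hm1⟩ := h1 1 (by decide)
  obtain ⟨m2, hm2⟩ := h1 2 (by decide)
  obtain ⟨m3, hm3⟩ := h1 3 (by decide)
  obtain ⟨m7, hm7⟩ := h1 7 (by decide)
  obtain ⟨m8, hm8⟩ := h1 8 (by decide)
  obtain ⟨n4, hn4⟩ := h2 4 (by decide)
  obtain ⟨n5, hn5⟩ := h2 5 (by decide)
  obtain ⟨n6, hn6⟩ := h2 6 (by decide)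
  obtain ⟨n9, hn9⟩ := h2 9 (by decide)
  obtain ⟨n10, hn10⟩ := h2 10 (by decide)
  obtain ⟨n11, hn11⟩ := h2 11 (by decide)
  -- each integer-valued b is ≤ 0
  have hb4 := nonpos_of_int _ n4 hn4 (hpos 4)
  have hb5 := nonpos_of_int _ n5 hn5 (hpos 5)
  have hb6 := nonpos_of_int _ n6 hn6 (hpos 6)
  have hb9 := nonpos_of_int _ n9 hn9 (hpos 9)
  have hb10 := nonpos_of_int _ n10 hn10 (hpos 10)
  have hb11 := nonpos_of_int _ n11 hn11 (hpos 11)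
  -- each triple-point sum is an integer, hence ≤ 0
  have t1 : b 1 + b 2 + b 4 ≤ 0 :=
    nonpos_of_int _ (m1 + m2 + n4 + 1) (by push_cast; linarith) hs1
  have t2 : b 2 + b 3 + b 5 ≤ 0 :=
    nonpos_of_int _ (m2 + m3 + n5 + 1) (by push_cast; linarith) hs2
  have t3 : b 1 + b 3 + b 6 ≤ 0 :=
    nonpos_of_int _ (m1 + m3 + n6 + 1) (by push_cast; linarith) hs3
  have t4 : b 7 + b 8 + b 9 ≤ 0 :=
    nonpos_of_int _ (m7 + m8 + n9 + 1) (by push_cast; linarith) hs4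
  have t5 : b 0 + b 7 + b 10 ≤ 0 :=
    nonpos_of_int _ (m0 + m7 + n10 + 1) (by push_cast; linarith) hs5
  have t6 : b 0 + b 8 + b 11 ≤ 0 :=
    nonpos_of_int _ (m0 + m8 + n11 + 1) (by push_cast; linarith) hs6
  simp only [Fin.sum_univ_succ, Fin.sum_univ_zero] at hsum
  have hsum' : b 0 + (b 1 + (b 2 + (b 3 + (b 4 + (b 5 + (b 6 + (b 7 + (b 8 + (b 9 + (b 10 + (b 11 + 0))))))))))) = 0 := hsum
  have hb1 : b 1 = 0 := by linarith
  have : (2 * m1 : ℝ) = -1 := by linarith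
  have : (2 * m1 : ℤ) = -1 := by exact_mod_cast this
  omega
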